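/- Fix 0 < r < 1 and let C₂ = 2(r+1)² / (r(1−r)). Then for all ξ ∈ ℝ²_{>0} and all q ∈ (r,1), | ξ̄(q)·e₁ − ξ₁/|ξ|₁ | ≤ C₂ |q − p̄(ξ)|. -/

import Mathlib

/-!
Writing `D(q) = r(1-q)² + (q-r)²` for the denominator of `ξ̄(q)·e₁`, the point `p̄(ξ)` is the
unique `q ∈ (r,1)` with `(1-q) : (q-r) = (ξ₁ + s) : (rξ₂ + s)`, where `s = √(rξ₁ξ₂)`; since
`r(ξ₁ + s)² = rξ₁ N` and `(rξ₂ + s)² = rξ₂ N` with `N = ξ₁ + rξ₂ + 2s`, this gives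
`ξ̄(p̄(ξ))·e₁ = ξ₁/|ξ|₁`. It then suffices that `q ↦ ξ̄(q)·e₁` is `(r+1)²/(r(1-r))`-Lipschitz on
`[r,1]`, which follows from the explicit difference quotient and the lower bound
`(r+1) D(q) = ((r+1)q - 2r)² + r(1-r)² ≥ r(1-r)²`.
-/

noncomputable section

/-- The minimizing parameter `p̄(ξ₁,ξ₂)`. -/
def pbar (r a b : ℝ) : ℝ :=
  (r * (a + b) + (r + 1) * Real.sqrt (r * a * b)) /
    (a + r * b + 2 * Real.sqrt (r * a * b))

/-- The first coordinate of the characteristic direction `ξ̄(q)`. -/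
def xibar1 (r q : ℝ) : ℝ :=
  r * (1 - q) ^ 2 / (q ^ 2 * (r + 1) - 4 * q * r + r * (r + 1))

lemma xibar1_eq_div (r q : ℝ) :
    xibar1 r q = r * (1 - q) ^ 2 / (r * (1 - q) ^ 2 + (q - r) ^ 2) := by
  rw [xibar1]
  ring_nf

lemma xibar1_eq_of_eq_mul {r q k x y : ℝ} (hk : k ≠ 0) (hx : 1 - q = k * x)
    (hy : q - r = k * y) : xibar1 r q = r * x ^ 2 / (r * x ^ 2 + y ^ 2) := by
  rw [xibar1_eq_div, hx, hy]
  field_simp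

lemma mul_one_sub_sq_le_mul_xibar1_denom (r q : ℝ) :
    r * (1 - r) ^ 2 ≤ (r + 1) * (r * (1 - q) ^ 2 + (q - r) ^ 2) := by
  nlinarith [sq_nonneg ((r + 1) * q - 2 * r)]

lemma xibar1_denom_pos {r : ℝ} (hr0 : 0 < r) (hr1 : r < 1) (q : ℝ) :
    0 < r * (1 - q) ^ 2 + (q - r) ^ 2 := by
  have h1r : 0 < 1 - r := sub_pos.2 hr1
  exact pos_of_mul_pos_right ((mul_pos hr0 (pow_pos h1r 2)).trans_le
    (mul_one_sub_sq_le_mul_xibar1_denom r q)) (by positivity)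

lemma xibar1_sub_xibar1 {r p q : ℝ} (hp : r * (1 - p) ^ 2 + (p - r) ^ 2 ≠ 0)
    (hq : r * (1 - q) ^ 2 + (q - r) ^ 2 ≠ 0) :
    xibar1 r q - xibar1 r p =
      r * (1 - r) * ((1 - q) * (p - r) + (1 - p) * (q - r)) /
        ((r * (1 - q) ^ 2 + (q - r) ^ 2) * (r * (1 - p) ^ 2 + (p - r) ^ 2)) * (p - q) := by
  rw [xibar1_eq_div, xibar1_eq_div, div_sub_div _ _ hq hp, div_mul_eq_mul_div]
  ring

lemma abs_xibar1_sub_xibar1_le {r p q : ℝ} (hr0 : 0 < r) (hr1 : r < 1)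
    (hp : p ∈ Set.Icc r 1) (hq : q ∈ Set.Icc r 1) :
    |xibar1 r q - xibar1 r p| ≤ (r + 1) ^ 2 / (r * (1 - r)) * |q - p| := by
  obtain ⟨hpr, hp1⟩ := hp
  obtain ⟨hqr, hq1⟩ := hq
  set Dp := r * (1 - p) ^ 2 + (p - r) ^ 2
  set Dq := r * (1 - q) ^ 2 + (q - r) ^ 2
  set B := (1 - q) * (p - r) + (1 - p) * (q - r)
  have hDp : 0 < Dp := xibar1_denom_pos hr0 hr1 p
  have hDq : 0 < Dq := xibar1_denom_pos hr0 hr1 q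
  have h1r : 0 < 1 - r := by linarith
  have hB0 : 0 ≤ B := by positivity
  -- with `u = 1 - q`, `v = p - r` in `[0, 1 - r]`: `(1-r)² - B = u(1-r-v) + v(1-r-u)`
  have hB : B ≤ (1 - r) ^ 2 := by nlinarith [mul_nonneg (sub_nonneg.2 hq1) (sub_nonneg.2 hpr)]
  have hfactor : r * (1 - r) * B / (Dq * Dp) ≤ (r + 1) ^ 2 / (r * (1 - r)) := by
    rw [div_le_div_iff₀ (by positivity) (by positivity)]
    calc r * (1 - r) * B * (r * (1 - r)) = (r * (1 - r)) ^ 2 * B := by ring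
      _ ≤ (r * (1 - r)) ^ 2 * (1 - r) ^ 2 := by gcongr
      _ = (r * (1 - r) ^ 2) * (r * (1 - r) ^ 2) := by ring
      _ ≤ ((r + 1) * Dq) * ((r + 1) * Dp) :=
          mul_le_mul (mul_one_sub_sq_le_mul_xibar1_denom r q)
            (mul_one_sub_sq_le_mul_xibar1_denom r p) (by positivity) (by positivity)
      _ = (r + 1) ^ 2 * (Dq * Dp) := by ring
  rw [xibar1_sub_xibar1 hDp.ne' hDq.ne', abs_mul, abs_sub_comm p q,
    abs_of_nonneg (by positivity : 0 ≤ r * (1 - r) * B / (Dq * Dp))]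
  exact mul_le_mul_of_nonneg_right hfactor (abs_nonneg _)

section pbar

variable {r a b : ℝ}

lemma one_sub_pbar (hN : a + r * b + 2 * √(r * a * b) ≠ 0) :
    1 - pbar r a b = (1 - r) * (a + √(r * a * b)) / (a + r * b + 2 * √(r * a * b)) := by
  rw [pbar, one_sub_div hN]
  ring

lemma pbar_sub (hN : a + r * b + 2 * √(r * a * b) ≠ 0) :
    pbar r a b - r = (1 - r) * (r * b + √(r * a * b)) / (a + r * b + 2 * √(r * a * b)) := by
  rw [pbar, div_sub' hN]
  ring

lemma pbar_mem_Ioo (hr0 : 0 < r) (hr1 : r < 1) (ha : 0 < a) (hb : 0 < b) :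
    pbar r a b ∈ Set.Ioo r 1 := by
  have hN : 0 < a + r * b + 2 * √(r * a * b) := by positivity
  have h1r : 0 < 1 - r := by linarith
  have h1 : 0 < 1 - pbar r a b := by rw [one_sub_pbar hN.ne']; positivity
  have h2 : 0 < pbar r a b - r := by rw [pbar_sub hN.ne']; positivity
  constructor <;> linarith

lemma xibar1_pbar (hr0 : 0 < r) (hr1 : r ≠ 1) (ha : 0 < a) (hb : 0 < b) :
    xibar1 r (pbar r a b) = a / (a + b) := by
  have hN : 0 < a + r * b + 2 * √(r * a * b) := by positivity
  have hs : √(r * a * b) ^ 2 = r * a * b := Real.sq_sqrt (by positivity)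
  have hk : (1 - r) / (a + r * b + 2 * √(r * a * b)) ≠ 0 :=
    div_ne_zero (sub_ne_zero.2 hr1.symm) hN.ne'
  rw [xibar1_eq_of_eq_mul hk (by rw [one_sub_pbar hN.ne', mul_div_right_comm])
    (by rw [pbar_sub hN.ne', mul_div_right_comm])]
  generalize √(r * a * b) = s at hs hN
  have hu : r * (a + s) ^ 2 = r * a * (a + r * b + 2 * s) := by linear_combination r * hs
  have hv : (r * b + s) ^ 2 = r * b * (a + r * b + 2 * s) := by linear_combination hs
  rw [hu, hv]
  field_simp

end pbar

/-- **Lipschitz bound for `q ↦ ξ̄(q)·e₁`.**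
For `0 < r < 1`, with `C₂ = 2(r+1)²/(r(1−r))`, one has
`|ξ̄(q)·e₁ − ξ₁/|ξ|₁| ≤ C₂ |q − p̄(ξ)|` for all `ξ ∈ ℝ²_{>0}` and `q ∈ (r,1)`. -/
theorem xibar_lipschitz (r : ℝ) (hr0 : 0 < r) (hr1 : r < 1)
    (ξ₁ ξ₂ : ℝ) (h1 : 0 < ξ₁) (h2 : 0 < ξ₂)
    (q : ℝ) (hq : q ∈ Set.Ioo r 1) :
    |xibar1 r q - ξ₁ / (ξ₁ + ξ₂)| ≤
      2 * (r + 1) ^ 2 / (r * (1 - r)) * |q - pbar r ξ₁ ξ₂| := by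
  have hp := pbar_mem_Ioo hr0 hr1 h1 h2
  rw [← xibar1_pbar hr0 hr1.ne h1 h2]
  calc |xibar1 r q - xibar1 r (pbar r ξ₁ ξ₂)|
      ≤ (r + 1) ^ 2 / (r * (1 - r)) * |q - pbar r ξ₁ ξ₂| :=
        abs_xibar1_sub_xibar1_le hr0 hr1 (Set.Ioo_subset_Icc_self hp) (Set.Ioo_subset_Icc_self hq)
    _ ≤ 2 * (r + 1) ^ 2 / (r * (1 - r)) * |q - pbar r ξ₁ ξ₂| := by
        have : 0 < 1 - r := sub_pos.2 hr1
        gcongr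
        linarith [sq_nonneg (r + 1)]

end
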